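/- Let f : {0,1}^n → Bool and suppose {0,1}^n is partitioned into R subcubes such that f is constant on each subcube of the partition. Then the correlation of f with parity satisfies |#{α ∈ {0,1}^n : f(α) = parity(α)} − #{α ∈ {0,1}^n : f(α) ≠ parity(α)}| ≤ R; equivalently, |P(f(α) = parity(α)) − P(f(α) ≠ parity(α))| ≤ R · 2^(−n) for α chosen uniformly at random. -/

import Mathlib

/-!
Write the difference of the two counts as the sum of the sign `±1` of agreement between `f` and
parity, and split that sum along the partition. On a subcube with a free coordinate `i`, `f` is
constant while flipping `i` flips parity, so flipping `i` is a sign-reversing involution and the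
subcube contributes `0`. A subcube with no free coordinate is a single point and contributes at
most `1` in absolute value.
-/

open Classical

/-- The parity function on `n` variables: the XOR of all coordinates (`true` iff odd parity). -/
def parity (n : ℕ) (α : Fin n → Bool) : Bool :=
  (∑ i : Fin n, (α i).toNat) % 2 == 1

/-- The subcube defined by a restriction `ρ` (where `ρ i = some b` fixes coordinate `i` to `b`
and `ρ i = none` leaves it free): the set of all points extending `ρ`. -/
def Subcube {n : ℕ} (ρ : Fin n → Option Bool) : Set (Fin n → Bool) :=
  {α | ∀ (i : Fin n) (b : Bool), ρ i = some b → α i = b}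

open Finset Function

section AgreementSign

variable {X : Type*}

def agreementSign (f g : X → Bool) (x : X) : ℤ := if f x = g x then 1 else -1

lemma abs_agreementSign (f g : X → Bool) (x : X) : |agreementSign f g x| = 1 := by
  unfold agreementSign; split <;> simp

lemma agreementSign_eq_neg {f g : X → Bool} {x y : X} (hf : f y = f x) (hg : g y = !g x) :
    agreementSign f g y = -agreementSign f g x := by
  unfold agreementSign
  rw [hf, hg]
  cases f x <;> cases g x <;> simp

lemma sum_agreementSign [Fintype X] (f g : X → Bool) :
    ∑ x, agreementSign f g x = (#{x | f x = g x} : ℤ) - #{x | f x ≠ g x} := by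
  simp only [agreementSign, sum_ite, sum_const, ne_eq]
  ring

end AgreementSign

variable {n : ℕ}

lemma parity_update_not (α : Fin n → Bool) (i : Fin n) :
    parity n (update α i (!α i)) = !parity n α := by
  unfold parity
  have hsplit : ∀ β : Fin n → Bool,
      ∑ j, (β j).toNat = (β i).toNat + ∑ j ∈ univ.erase i, (β j).toNat :=
    fun β => (add_sum_erase _ _ (mem_univ i)).symm
  rw [hsplit, hsplit α, update_self,
    sum_congr rfl fun j hj => by rw [update_of_ne (ne_of_mem_erase hj)]]
  generalize ∑ j ∈ univ.erase i, (α j).toNat = k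
  cases α i <;> rcases Nat.mod_two_eq_zero_or_one k with hk | hk <;> simp [Nat.add_mod, hk]

lemma update_mem_subcube {ρ : Fin n → Option Bool} {α : Fin n → Bool} {i : Fin n}
    (hi : ρ i = none) (hα : α ∈ Subcube ρ) (b : Bool) : update α i b ∈ Subcube ρ := by
  intro j c hj
  have hji : j ≠ i := by rintro rfl; simp [hi] at hj
  rw [update_of_ne hji]
  exact hα j c hj

lemma subcube_subsingleton {ρ : Fin n → Option Bool} (hρ : ∀ i, ρ i ≠ none) :
    (Subcube ρ).Subsingleton := by
  intro α hα β hβ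
  funext i
  obtain ⟨b, hb⟩ := Option.ne_none_iff_exists'.1 (hρ i)
  rw [hα i b hb, hβ i b hb]

lemma sum_subcube_eq_zero {M : Type*} [AddCommGroup M] {ρ : Fin n → Option Bool} {i : Fin n}
    (hi : ρ i = none) {g : (Fin n → Bool) → M}
    (hg : ∀ α ∈ Subcube ρ, g (update α i (!α i)) = -g α) :
    ∑ α ∈ (Subcube ρ).toFinset, g α = 0 := by
  refine sum_involution (fun α _ => update α i (!α i)) (fun α hα => ?_) (fun α _ _ h => ?_)
    (fun α hα => ?_) (fun α _ => by simp)
  · rw [hg α (Set.mem_toFinset.1 hα), add_neg_cancel]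
  · simpa using congrFun h i
  · exact Set.mem_toFinset.2 (update_mem_subcube hi (Set.mem_toFinset.1 hα) _)

lemma abs_sum_subcube_le_one {ρ : Fin n → Option Bool} {g : (Fin n → Bool) → ℤ}
    (hg_abs : ∀ α, |g α| ≤ 1)
    (hg_flip : ∀ i, ρ i = none → ∀ α ∈ Subcube ρ, g (update α i (!α i)) = -g α) :
    |∑ α ∈ (Subcube ρ).toFinset, g α| ≤ 1 := by
  by_cases hfree : ∃ i, ρ i = none
  · obtain ⟨i, hi⟩ := hfree
    simp [sum_subcube_eq_zero hi (hg_flip i hi)]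
  · push Not at hfree
    have hcard : #(Subcube ρ).toFinset ≤ 1 :=
      card_le_one.2 fun α hα β hβ =>
        subcube_subsingleton hfree (Set.mem_toFinset.1 hα) (Set.mem_toFinset.1 hβ)
    calc |∑ α ∈ (Subcube ρ).toFinset, g α|
        ≤ ∑ α ∈ (Subcube ρ).toFinset, |g α| := abs_sum_le_sum_abs _ _
      _ ≤ #(Subcube ρ).toFinset • (1 : ℤ) := sum_le_card_nsmul _ _ _ fun α _ => hg_abs α
      _ ≤ 1 := by simpa using hcard

lemma sum_eq_sum_subcube {M : Type*} [AddCommMonoid M] {P : Finset (Fin n → Option Bool)}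
    (hdisj : ∀ ρ ∈ P, ∀ ρ' ∈ P, ρ ≠ ρ' → Disjoint (Subcube ρ) (Subcube ρ'))
    (hcover : ∀ α : Fin n → Bool, ∃ ρ ∈ P, α ∈ Subcube ρ) (g : (Fin n → Bool) → M) :
    ∑ α, g α = ∑ ρ ∈ P, ∑ α ∈ (Subcube ρ).toFinset, g α := by
  have huniv : (univ : Finset (Fin n → Bool)) = P.biUnion fun ρ => (Subcube ρ).toFinset := by
    ext α
    simpa using hcover α
  rw [huniv, sum_biUnion fun ρ hρ ρ' hρ' hne => Set.disjoint_toFinset.2 (hdisj ρ hρ ρ' hρ' hne)]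

/-- If `{0,1}^n` is partitioned into `R` subcubes on each of which `f` is constant, then the
correlation of `f` with parity is at most `R · 2^(-n)`: the number of points where `f` agrees
with parity and the number of points where it disagrees differ by at most `R`. -/
theorem correlation_with_parity_le {n : ℕ} (f : (Fin n → Bool) → Bool)
    (P : Finset (Fin n → Option Bool)) (R : ℕ) (hR : P.card = R)
    (hdisj : ∀ ρ ∈ P, ∀ ρ' ∈ P, ρ ≠ ρ' → Disjoint (Subcube ρ) (Subcube ρ'))
    (hcover : ∀ α : Fin n → Bool, ∃ ρ ∈ P, α ∈ Subcube ρ)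
    (hconst : ∀ ρ ∈ P, ∀ α ∈ Subcube ρ, ∀ β ∈ Subcube ρ, f α = f β) :
    |((Finset.univ.filter fun α : Fin n → Bool => f α = parity n α).card : ℤ) -
        ((Finset.univ.filter fun α : Fin n → Bool => f α ≠ parity n α).card : ℤ)| ≤ (R : ℤ) ∧
    |((Finset.univ.filter fun α : Fin n → Bool => f α = parity n α).card : ℝ) / 2 ^ n -
        ((Finset.univ.filter fun α : Fin n → Bool => f α ≠ parity n α).card : ℝ) / 2 ^ n| ≤
      (R : ℝ) * (2 : ℝ) ^ (-(n : ℝ)) := by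
  have hcube : ∀ ρ ∈ P, |∑ α ∈ (Subcube ρ).toFinset, agreementSign f (parity n) α| ≤ 1 :=
    fun ρ hρ => abs_sum_subcube_le_one (abs_agreementSign f _ · |>.le) fun i hi α hα =>
      agreementSign_eq_neg (hconst ρ hρ _ (update_mem_subcube hi hα _) α hα)
        (parity_update_not α i)
  have hint : |(#{α | f α = parity n α} : ℤ) - #{α | f α ≠ parity n α}| ≤ R := by
    rw [← sum_agreementSign, sum_eq_sum_subcube hdisj hcover, ← hR]
    calc _ ≤ ∑ ρ ∈ P, |∑ α ∈ (Subcube ρ).toFinset, agreementSign f (parity n) α| :=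
          abs_sum_le_sum_abs _ _
      _ ≤ #P • (1 : ℤ) := sum_le_card_nsmul _ _ _ hcube
      _ = #P := by simp
  refine ⟨hint, ?_⟩
  rw [Real.rpow_neg zero_le_two, Real.rpow_natCast, ← div_eq_mul_inv, ← sub_div, abs_div,
    abs_of_pos (pow_pos two_pos n : (0 : ℝ) < 2 ^ n)]
  gcongr
  exact_mod_cast hint
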